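/- There is a unique ℤ_[2]-algebra homomorphism σ : R → R with σ(a₁) = a₁, σ(a₃) = a₃, and σ(a₆) = −a₆ − c (this is well defined because −a₆ − c satisfies the same quadratic relation f as a₆); it satisfies σ ∘ σ = id, and its fixed subring {r ∈ R : σ(r) = r} equals the ℤ_[2]-subalgebra of R generated by a₁ and a₃. (This is the Atkin–Lehner involution w₁₅ on the ring of automorphic forms of the double cover, and the computation of its invariants.) -/

import Mathlib

open MvPolynomial

noncomputable section

/-- `c = a₁⁶ + a₁³a₃ + a₃²` in `P = ℤ_[2][a₁, a₃, a₆]` (with `X 0 = a₁`, `X 1 = a₃`, `X 2 = a₆`). -/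
def cpoly : MvPolynomial (Fin 3) ℤ_[2] := (X 0) ^ 6 + (X 0) ^ 3 * X 1 + (X 1) ^ 2

/-- `f = a₆² + a₆·c + c² − (5/9)·a₁⁶·c` in `P`. -/
def fpoly : MvPolynomial (Fin 3) ℤ_[2] :=
  (X 2) ^ 2 + X 2 * cpoly + cpoly ^ 2 - C (5 * Ring.inverse 9) * (X 0) ^ 6 * cpoly

/-- `R = P/(f)`, the ring of automorphic forms on the double cover `𝒴`. -/
abbrev RD : Type := MvPolynomial (Fin 3) ℤ_[2] ⧸ Ideal.span {fpoly}

/-- The image of `a₁` in `R`. -/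
def b₁ : RD := Ideal.Quotient.mk _ (X 0)
/-- The image of `a₃` in `R`. -/
def b₃ : RD := Ideal.Quotient.mk _ (X 1)
/-- The image of `a₆` in `R`. -/
def b₆ : RD := Ideal.Quotient.mk _ (X 2)


/-- The image of `c = a₁⁶ + a₁³a₃ + a₃²` in `R`. -/
def bc : RD := b₁ ^ 6 + b₁ ^ 3 * b₃ + b₃ ^ 2

/-!
Over `A = ℤ_[2][a₁, a₃]` the relation `f` is a monic quadratic in `a₆` with linear coefficient `c`,
so `R = A[a₆]/(f)` is free over `A` with basis `1, a₆`, and `a₆ ↦ -a₆ - c` exchanges the two roots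
of `f`. This conjugation sends `s + t a₆` to `(s - t c) - t a₆`; the element is fixed exactly when
`2 t = 0`, i.e. `t = 0` since `A` is a domain of characteristic zero.
-/

section

open Polynomial

namespace AdjoinRoot

variable {A : Type*} [CommRing A] {F : A[X]}

theorem exists_eq_of_add_of_mul_root (hF : F.Monic) (hdeg : F.natDegree = 2)
    (x : AdjoinRoot F) : ∃ s t : A, x = of F s + of F t * root F := by
  obtain ⟨p, rfl⟩ := mk_surjective x
  have hF1 : F ≠ 1 := by rintro rfl; simp at hdeg
  have hp : (p %ₘ F).natDegree ≤ 1 := by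
    have := natDegree_modByMonic_lt p hF hF1
    omega
  refine ⟨(p %ₘ F).coeff 0, (p %ₘ F).coeff 1, ?_⟩
  conv_lhs =>
    rw [← mk_leftInverse hF (mk F p), modByMonicHom_mk, eq_X_add_C_of_natDegree_le_one hp]
  simp only [map_add, map_mul, mk_C, mk_X]
  ring

theorem of_add_of_mul_root_eq_zero_iff (hF : F.Monic) (hdeg : F.natDegree = 2) {s t : A} :
    of F s + of F t * root F = 0 ↔ s = 0 ∧ t = 0 := by
  have : Nontrivial A :=
    nontrivial_iff.mp (nontrivial_of_ne F 0 (ne_zero_of_natDegree_gt (hdeg ▸ two_pos)))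
  refine ⟨fun h ↦ ?_, fun ⟨hs, ht⟩ ↦ by simp [hs, ht]⟩
  set g := Polynomial.C t * Polynomial.X + Polynomial.C s
  have hdvd : F ∣ g := by
    rw [← mk_eq_zero]
    simpa [g, add_comm] using h
  have hlt : g.degree < F.degree := by
    rw [degree_eq_natDegree hF.ne_zero, hdeg]
    exact degree_linear_le.trans_lt (by norm_num)
  have hg : g = 0 := by
    rw [← (modByMonic_eq_self_iff hF).2 hlt, (modByMonic_eq_zero_iff_dvd hF).2 hdvd]
  exact ⟨by simpa [g] using congrArg (Polynomial.coeff · 0) hg,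
    by simpa [g] using congrArg (Polynomial.coeff · 1) hg⟩

end AdjoinRoot

end

namespace AtkinLehner

/-- `A = ℤ_[2][a₁, a₃]`, with `X 0`, `X 1` standing for `a₁`, `a₃`. -/
local notation "A" => MvPolynomial (Fin 2) ℤ_[2]

variable {S : Type*} [CommRing S] [Algebra ℤ_[2] S]

theorem aeval_cpoly (x : Fin 3 → S) : aeval x cpoly = x 0 ^ 6 + x 0 ^ 3 * x 1 + x 1 ^ 2 := by
  simp [cpoly]

theorem aeval_fpoly (x : Fin 3 → S) :
    aeval x fpoly = x 2 ^ 2 + x 2 * aeval x cpoly + aeval x cpoly ^ 2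
      - algebraMap ℤ_[2] S (5 * Ring.inverse 9) * x 0 ^ 6 * aeval x cpoly := by
  simp [fpoly]

theorem mkₐ_eq_aeval : Ideal.Quotient.mkₐ ℤ_[2] (Ideal.span {fpoly}) = aeval ![b₁, b₃, b₆] := by
  ext i
  fin_cases i <;> simp [b₁, b₃, b₆]

theorem aeval_fpoly_eq_zero : aeval ![b₁, b₃, b₆] fpoly = 0 := by
  rw [← mkₐ_eq_aeval]
  exact Ideal.Quotient.mk_singleton_self fpoly

theorem aeval_conj_fpoly : aeval ![b₁, b₃, -b₆ - bc] fpoly = 0 := by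
  have h := aeval_fpoly_eq_zero
  simp only [aeval_fpoly, aeval_cpoly, Matrix.cons_val, bc] at h ⊢
  linear_combination h

theorem algHom_ext {φ ψ : RD →ₐ[ℤ_[2]] S} (h₁ : φ b₁ = ψ b₁) (h₃ : φ b₃ = ψ b₃)
    (h₆ : φ b₆ = ψ b₆) : φ = ψ := by
  refine Ideal.Quotient.algHom_ext ℤ_[2] (MvPolynomial.algHom_ext fun i ↦ ?_)
  fin_cases i
  exacts [h₁, h₃, h₆]

def atkinLehner : RD →ₐ[ℤ_[2]] RD :=
  Ideal.Quotient.liftₐ _ (aeval ![b₁, b₃, -b₆ - bc]) fun p hp ↦ by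
    obtain ⟨q, rfl⟩ := Ideal.mem_span_singleton'.mp hp
    rw [map_mul, aeval_conj_fpoly, mul_zero]

theorem atkinLehner_mk (p : MvPolynomial (Fin 3) ℤ_[2]) :
    atkinLehner (Ideal.Quotient.mk _ p) = aeval ![b₁, b₃, -b₆ - bc] p := rfl

theorem atkinLehner_b₁ : atkinLehner b₁ = b₁ := by simp [b₁, atkinLehner_mk]

theorem atkinLehner_b₃ : atkinLehner b₃ = b₃ := by simp [b₃, atkinLehner_mk]

theorem atkinLehner_b₆ : atkinLehner b₆ = -b₆ - bc := by simp [b₆, atkinLehner_mk]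

def cA : A := X 0 ^ 6 + X 0 ^ 3 * X 1 + X 1 ^ 2

def relPoly : Polynomial A :=
  Polynomial.X ^ 2 + Polynomial.C cA * Polynomial.X
    + Polynomial.C (cA ^ 2 - C (5 * Ring.inverse 9) * X 0 ^ 6 * cA)

theorem relPoly_monic : relPoly.Monic := by
  unfold relPoly
  monicity!

theorem relPoly_natDegree : relPoly.natDegree = 2 := by
  unfold relPoly
  compute_degree!

/-- `finRotate 3` moves `a₆ = X 2` to the index `0` that `finSuccEquiv` turns into the
polynomial variable. -/
def polyEquiv : MvPolynomial (Fin 3) ℤ_[2] ≃ₐ[ℤ_[2]] Polynomial A :=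
  (renameEquiv ℤ_[2] (finRotate 3)).trans (finSuccEquiv ℤ_[2] 2)

theorem polyEquiv_X_zero : polyEquiv (X 0) = Polynomial.C (X 0) := by
  simp only [polyEquiv, AlgEquiv.trans_apply, renameEquiv_apply, rename_X,
    show finRotate 3 0 = Fin.succ 0 from rfl, finSuccEquiv_X_succ]

theorem polyEquiv_X_one : polyEquiv (X 1) = Polynomial.C (X 1) := by
  simp only [polyEquiv, AlgEquiv.trans_apply, renameEquiv_apply, rename_X,
    show finRotate 3 1 = Fin.succ 1 from rfl, finSuccEquiv_X_succ]

theorem polyEquiv_X_two : polyEquiv (X 2) = Polynomial.X := by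
  simp only [polyEquiv, AlgEquiv.trans_apply, renameEquiv_apply, rename_X,
    show finRotate 3 2 = 0 from rfl, finSuccEquiv_X_zero]

theorem polyEquiv_C (a : ℤ_[2]) : polyEquiv (C a) = Polynomial.C (C a) :=
  polyEquiv.commutes a

theorem polyEquiv_fpoly : polyEquiv fpoly = relPoly := by
  simp only [fpoly, cpoly, relPoly, cA, map_sub, map_add, map_mul, map_pow, polyEquiv_C,
    polyEquiv_X_zero, polyEquiv_X_one, polyEquiv_X_two]
  ring

def quotEquiv : RD ≃ₐ[ℤ_[2]] AdjoinRoot relPoly :=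
  Ideal.quotientEquivAlg _ _ polyEquiv <| by
    rw [Ideal.map_span, Set.image_singleton]
    exact congrArg (fun p ↦ Ideal.span {p}) polyEquiv_fpoly.symm

theorem quotEquiv_mk (p : MvPolynomial (Fin 3) ℤ_[2]) :
    quotEquiv (Ideal.Quotient.mk _ p) = AdjoinRoot.mk relPoly (polyEquiv p) := rfl

theorem quotEquiv_b₆ : quotEquiv b₆ = AdjoinRoot.root relPoly := by
  rw [b₆, quotEquiv_mk, polyEquiv_X_two, AdjoinRoot.mk_X]

def baseMap : A →ₐ[ℤ_[2]] RD := aeval ![b₁, b₃]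

theorem baseMap_cA : baseMap cA = bc := by
  simp [baseMap, cA, bc]

theorem baseMap_mem_adjoin (q : A) :
    baseMap q ∈ Algebra.adjoin ℤ_[2] ({b₁, b₃} : Set RD) := by
  rw [← Matrix.range_cons_cons_empty, Algebra.adjoin_range_eq_range_aeval]
  exact AlgHom.mem_range_self _ q

theorem quotEquiv_baseMap (q : A) : quotEquiv (baseMap q) = AdjoinRoot.of relPoly q := by
  suffices quotEquiv.toAlgHom.comp baseMap = IsScalarTower.toAlgHom ℤ_[2] A _ from
    DFunLike.congr_fun this q
  refine MvPolynomial.algHom_ext fun i ↦ ?_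
  fin_cases i
  · simp [baseMap, b₁, quotEquiv_mk, polyEquiv_X_zero]
  · simp [baseMap, b₃, quotEquiv_mk, polyEquiv_X_one]

theorem exists_eq_baseMap_add_baseMap_mul_b₆ (r : RD) :
    ∃ s t : A, r = baseMap s + baseMap t * b₆ := by
  obtain ⟨s, t, h⟩ :=
    AdjoinRoot.exists_eq_of_add_of_mul_root relPoly_monic relPoly_natDegree (quotEquiv r)
  refine ⟨s, t, quotEquiv.injective ?_⟩
  rw [h, map_add, map_mul, quotEquiv_baseMap, quotEquiv_baseMap, quotEquiv_b₆]

theorem baseMap_add_baseMap_mul_b₆_eq_zero_iff {s t : A} :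
    baseMap s + baseMap t * b₆ = 0 ↔ s = 0 ∧ t = 0 := by
  rw [← map_eq_zero_iff quotEquiv quotEquiv.injective, map_add, map_mul, quotEquiv_baseMap,
    quotEquiv_baseMap, quotEquiv_b₆]
  exact AdjoinRoot.of_add_of_mul_root_eq_zero_iff relPoly_monic relPoly_natDegree

theorem mem_adjoin_of_apply_eq_self {σ : RD →ₐ[ℤ_[2]] RD} (h₁ : σ b₁ = b₁) (h₃ : σ b₃ = b₃)
    (h₆ : σ b₆ = -b₆ - bc) {r : RD} (hr : σ r = r) :
    r ∈ Algebra.adjoin ℤ_[2] ({b₁, b₃} : Set RD) := by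
  obtain ⟨s, t, rfl⟩ := exists_eq_baseMap_add_baseMap_mul_b₆ r
  have hbase : σ.comp baseMap = baseMap := by
    refine MvPolynomial.algHom_ext fun i ↦ ?_
    fin_cases i
    · simpa [baseMap] using h₁
    · simpa [baseMap] using h₃
  have hσ (q : A) : σ (baseMap q) = baseMap q := DFunLike.congr_fun hbase q
  rw [map_add, map_mul, hσ, hσ, h₆] at hr
  have h0 : baseMap (t * cA) + baseMap (2 * t) * b₆ = 0 := by
    rw [map_mul, map_mul, baseMap_cA, map_ofNat]
    linear_combination -hr
  obtain ⟨-, h2t⟩ := baseMap_add_baseMap_mul_b₆_eq_zero_iff.mp h0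
  rw [(mul_eq_zero.mp h2t).resolve_left two_ne_zero, map_zero, zero_mul, add_zero]
  exact baseMap_mem_adjoin s

end AtkinLehner

open AtkinLehner in
/-- There is a unique `ℤ_[2]`-algebra homomorphism `σ : R → R` with
`σ(a₁) = a₁`, `σ(a₃) = a₃`, `σ(a₆) = −a₆ − c`; it is an involution and its fixed subring
is the `ℤ_[2]`-subalgebra generated by `a₁` and `a₃`.  (The Atkin–Lehner involution
`w₁₅` on the automorphic forms of the double cover, and its invariants.) -/
theorem atkin_lehner_involution_and_invariants :
    (∃! σ : RD →ₐ[ℤ_[2]] RD, σ b₁ = b₁ ∧ σ b₃ = b₃ ∧ σ b₆ = -b₆ - bc) ∧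
    ∀ σ : RD →ₐ[ℤ_[2]] RD, σ b₁ = b₁ → σ b₃ = b₃ → σ b₆ = -b₆ - bc →
      σ.comp σ = AlgHom.id ℤ_[2] RD ∧
      ∀ r : RD, σ r = r ↔ r ∈ Algebra.adjoin ℤ_[2] ({b₁, b₃} : Set RD) := by
  refine ⟨⟨atkinLehner, ⟨atkinLehner_b₁, atkinLehner_b₃, atkinLehner_b₆⟩, ?_⟩, ?_⟩
  · rintro σ ⟨h₁, h₃, h₆⟩
    exact algHom_ext (h₁.trans atkinLehner_b₁.symm) (h₃.trans atkinLehner_b₃.symm)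
      (h₆.trans atkinLehner_b₆.symm)
  intro σ h₁ h₃ h₆
  have hc : σ bc = bc := by simp [bc, h₁, h₃]
  refine ⟨algHom_ext ?_ ?_ ?_, fun r ↦ ⟨mem_adjoin_of_apply_eq_self h₁ h₃ h₆, fun hr ↦ ?_⟩⟩
  · simp [h₁]
  · simp [h₃]
  · simp [h₆, hc]
  exact Algebra.adjoin_le (S := AlgHom.equalizer σ (AlgHom.id ℤ_[2] RD)) (Set.pair_subset h₁ h₃) hr
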